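/- arXiv:2508.08191 — 2 statements merged into one kernel-verified Lean document; each statement's English description precedes it below -/
import Mathlib

section
/- Suppose a = δ_{g₀} ⋆ ã for some g₀ ∈ G and ã : G → 𝔽₂, i.e. A = T_{g₀} · Ã where T_{g₀} = circ(δ_{g₀}) is the translation permutation matrix and Ã = circ(ã) (this is the paper's condition that the polynomial A has a common monomial factor, A = αᵀÃ). Let H̃_X, H̃_Z be the TT code matrices built from (ã, b, c) and H_X, H_Z those built from (a, b, c). Then rank(H̃_X) = rank(H_X) and rank(H̃_Z) = rank(H_Z); hence the number of logical qubits k = 3N − rank(H_X) − rank(H_Z) is unchanged. -/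
open Matrix

/-- Convolution of functions `G → 𝔽₂`: `(P ⋆ Q)(x) = ∑_y P(y)·Q(x − y)`. -/
def conv {G : Type*} [AddCommGroup G] [Fintype G] (P Q : G → ZMod 2) : G → ZMod 2 :=
  fun x => ∑ y, P y * Q (x - y)

/-- The indicator function `δ_{g₀}` of `g₀ ∈ G`. -/
def delta {G : Type*} [DecidableEq G] (g₀ : G) : G → ZMod 2 :=
  fun x => if x = g₀ then 1 else 0

/-- `H_X = [circ(p) circ(q) circ(r)]`. -/
def TT_HX {G : Type*} [AddCommGroup G] (p q r : G → ZMod 2) :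
    Matrix G (Fin 3 × G) (ZMod 2) :=
  Matrix.of fun g i =>
    ![Matrix.circulant p, Matrix.circulant q, Matrix.circulant r] i.1 g i.2

/-- `H_Z = [[0, circ(r)ᵀ, circ(q)ᵀ], [circ(r)ᵀ, 0, circ(p)ᵀ], [circ(q)ᵀ, circ(p)ᵀ, 0]]`. -/
def TT_HZ {G : Type*} [AddCommGroup G] (p q r : G → ZMod 2) :
    Matrix (Fin 3 × G) (Fin 3 × G) (ZMod 2) :=
  Matrix.of fun i j =>
    ![![0, (Matrix.circulant r)ᵀ, (Matrix.circulant q)ᵀ],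
      ![(Matrix.circulant r)ᵀ, 0, (Matrix.circulant p)ᵀ],
      ![(Matrix.circulant q)ᵀ, (Matrix.circulant p)ᵀ, 0]] i.1 j.1 i.2 j.2

/-!
Convolving with `δ_{g₀}` is translation: `a x = a' (x - g₀)`. Hence `H_X(a, b, c)` is
`H_X(a', b, c)` with the columns of its first block translated by `g₀`, and `H_Z(a, b, c)` is
`H_Z(a', b, c)` with the rows of its last two block rows and the columns of its first block
column translated by `g₀`. The `b`- and `c`-blocks in translated rows also lie in translated
columns, and there the two translations cancel because circulants are translation invariant.
Permuting rows and columns does not change the rank.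
-/

section Translation

variable {G : Type*} [AddCommGroup G]

lemma conv_delta_left [Fintype G] [DecidableEq G] (g : G) (v : G → ZMod 2) :
    conv (delta g) v = fun x => v (x - g) := by
  funext x
  simp [conv, delta]

def blockTranslate {ι : Type*} (s : ι → G) : ι × G ≃ ι × G :=
  Equiv.prodShear (Equiv.refl ι) fun i => Equiv.addRight (s i)

@[simp]
lemma blockTranslate_apply {ι : Type*} (s : ι → G) (i : ι) (x : G) :
    blockTranslate s (i, x) = (i, x + s i) := rfl

lemma TT_HX_translate_left (p q r : G → ZMod 2) (g : G) :
    TT_HX (fun x => p (x - g)) q r = (TT_HX p q r).submatrix id (blockTranslate ![g, 0, 0]) := by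
  ext x ⟨k, y⟩
  fin_cases k <;>
    simp only [TT_HX, of_apply, submatrix_apply, id_eq, blockTranslate_apply, circulant_apply,
      Fin.zero_eta, Fin.mk_one, Fin.reduceFinMk, cons_val_zero, cons_val_one, cons_val, add_zero,
      sub_sub]

lemma TT_HZ_translate_left (p q r : G → ZMod 2) (g : G) :
    TT_HZ (fun x => p (x - g)) q r =
      (TT_HZ p q r).submatrix (blockTranslate ![0, g, g]) (blockTranslate ![g, 0, 0]) := by
  ext ⟨k, x⟩ ⟨l, y⟩
  fin_cases k <;> fin_cases l <;>
    simp only [TT_HZ, of_apply, submatrix_apply, blockTranslate_apply, transpose_apply,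
      circulant_apply, Matrix.zero_apply, Fin.zero_eta, Fin.mk_one, Fin.reduceFinMk, cons_val_zero,
      cons_val_one, cons_val, add_zero, sub_sub, add_sub_add_right_eq_sub]

end Translation

/-- If `a = δ_{g₀} ⋆ a'` (the polynomial `a` has a common monomial factor) then the
TT codes built from `(a', b, c)` and from `(a, b, c)` have equal `rank(H_X)` and
equal `rank(H_Z)`; hence the number of logical qubits
`k = 3N − rank(H_X) − rank(H_Z)` is unchanged. -/
theorem tt_rank_invariant_of_monomial_factor {G : Type*} [AddCommGroup G]
    [Fintype G] [DecidableEq G] (a a' b c : G → ZMod 2) (g₀ : G)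
    (h : a = conv (delta g₀) a') :
    (TT_HX a' b c).rank = (TT_HX a b c).rank ∧
      (TT_HZ a' b c).rank = (TT_HZ a b c).rank ∧
      (3 * (Fintype.card G : ℤ)) - ((TT_HX a' b c).rank : ℤ) - ((TT_HZ a' b c).rank : ℤ) =
        (3 * (Fintype.card G : ℤ)) - ((TT_HX a b c).rank : ℤ) - ((TT_HZ a b c).rank : ℤ) := by
  rw [conv_delta_left] at h
  subst h
  have hX : (TT_HX a' b c).rank = (TT_HX (fun x => a' (x - g₀)) b c).rank := by
    rw [TT_HX_translate_left]
    exact (rank_submatrix _ (Equiv.refl G) _).symm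
  have hZ : (TT_HZ a' b c).rank = (TT_HZ (fun x => a' (x - g₀)) b c).rank := by
    rw [TT_HZ_translate_left, rank_submatrix]
  exact ⟨hX, hZ, by rw [hX, hZ]⟩
end

section
/- Suppose a = δ_{g₀} ⋆ ã for some g₀ ∈ G and ã : G → 𝔽₂ (A = T_{g₀} · Ã). Let H̃_X, H̃_Z be the TT code matrices built from (ã, b, c) and H_X, H_Z those built from (a, b, c). Then the set of Hamming weights of vectors in ker(H_Z) \ rs(H_X) equals the set of Hamming weights of vectors in ker(H̃_Z) \ rs(H̃_X). Consequently the X-distance d_X is unchanged when the common monomial factor is removed from A. -/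
open Matrix

/-- Row space `rs(M)`: the span of the rows of `M`. -/
def rowSpace {m n : Type*} (M : Matrix m n (ZMod 2)) : Submodule (ZMod 2) (n → ZMod 2) :=
  Submodule.span (ZMod 2) (Set.range fun i => M i)

/-!
Translating `a` by `g₀` is undone by re-indexing: shifting the second and third coordinate
blocks of `𝔽₂^{3G}` by `g₀`, together with the first block of rows of `H_Z` and all rows of
`H_X`, turns the matrices built from `δ_{g₀} ⋆ ã` into those built from `ã`. A permutation of
coordinates preserves Hamming weights and matches kernels and row spaces of the re-indexed
matrices.
-/

section Reindex

variable {m m' n r r' n' : Type*}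

/-- The minimum of this set is `d_X`. -/
def logicalWeights [Fintype n] (HX : Matrix m n (ZMod 2)) (HZ : Matrix m' n (ZMod 2)) : Set ℕ :=
  {w | ∃ v : n → ZMod 2, (HZ *ᵥ v = 0 ∧ v ∉ rowSpace HX) ∧ hammingNorm v = w}

theorem hammingNorm_comp_equiv {β : Type*} [Fintype n] [Fintype n'] [Zero β] [DecidableEq β]
    (f : n' ≃ n) (v : n → β) : hammingNorm (v ∘ f) = hammingNorm v :=
  Finset.card_equiv f (by simp)

theorem rowSpace_submatrix (M : Matrix m n (ZMod 2)) {e : r → m} (he : Function.Surjective e)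
    (f : n' → n) :
    rowSpace (M.submatrix e f) = (rowSpace M).map (LinearMap.funLeft (ZMod 2) (ZMod 2) f) := by
  rw [rowSpace, rowSpace, Submodule.map_span, ← Set.range_comp, ← he.range_comp]
  rfl

theorem comp_mem_rowSpace_submatrix_iff (M : Matrix m n (ZMod 2)) {e : r → m}
    (he : Function.Surjective e) (f : n' ≃ n) (v : n → ZMod 2) :
    v ∘ f ∈ rowSpace (M.submatrix e f) ↔ v ∈ rowSpace M := by
  rw [rowSpace_submatrix M he, ← SetLike.mem_coe, Submodule.map_coe]
  exact (LinearMap.funLeft_injective_of_surjective _ _ _ f.surjective).mem_set_image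

theorem submatrix_mulVec_comp_eq_zero_iff [Fintype n] [Fintype n'] (M : Matrix m n (ZMod 2))
    {e : r → m} (he : Function.Surjective e) (f : n' ≃ n) (v : n → ZMod 2) :
    M.submatrix e f *ᵥ (v ∘ f) = 0 ↔ M *ᵥ v = 0 := by
  rw [submatrix_mulVec_equiv, Function.comp_assoc, f.self_comp_symm, Function.comp_id,
    ← Pi.zero_comp e, he.injective_comp_right.eq_iff]

theorem logicalWeights_submatrix [Fintype n] [Fintype n'] (HX : Matrix m n (ZMod 2))
    (HZ : Matrix m' n (ZMod 2)) (e : r ≃ m) (e' : r' ≃ m') (f : n' ≃ n) :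
    logicalWeights (HX.submatrix e f) (HZ.submatrix e' f) = logicalWeights HX HZ := by
  ext w
  rw [logicalWeights, logicalWeights, Set.mem_ofPred, Set.mem_ofPred,
    f.injective.surjective_comp_right.exists]
  simp only [submatrix_mulVec_comp_eq_zero_iff HZ e'.surjective,
    comp_mem_rowSpace_submatrix_iff HX e.surjective, hammingNorm_comp_equiv]

end Reindex

section Translate

variable {G : Type*} [AddCommGroup G]

theorem delta_conv [Fintype G] [DecidableEq G] (g₀ : G) (f : G → ZMod 2) :
    conv (delta g₀) f = fun x => f (x - g₀) := by
  ext x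
  simp [conv, delta]

def blockShift {ι : Type*} (s : ι → G) : ι × G ≃ ι × G :=
  Equiv.prodShear (Equiv.refl ι) fun i => Equiv.addRight (s i)

theorem TT_HX_submatrix_blockShift (a b c : G → ZMod 2) (g₀ : G) :
    (TT_HX (fun x => a (x - g₀)) b c).submatrix (Equiv.addRight g₀) (blockShift ![0, g₀, g₀]) =
      TT_HX a b c := by
  ext g ⟨k, h⟩
  revert k
  simp [Fin.forall_fin_succ, TT_HX, blockShift, add_sub_right_comm, sub_add_eq_sub_sub]

theorem TT_HZ_submatrix_blockShift (a b c : G → ZMod 2) (g₀ : G) :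
    (TT_HZ (fun x => a (x - g₀)) b c).submatrix (blockShift ![g₀, 0, 0])
        (blockShift ![0, g₀, g₀]) = TT_HZ a b c := by
  ext ⟨k, g⟩ ⟨l, h⟩
  revert k l
  simp [Fin.forall_fin_succ, TT_HZ, blockShift, add_sub_right_comm, sub_add_eq_sub_sub]

end Translate

/-- If `a = δ_{g₀} ⋆ ã` then the set of Hamming weights of vectors in
`ker(H_Z) \ rs(H_X)` is the same for the TT codes built from `(a, b, c)` and
from `(ã, b, c)`; consequently the `X`-distance `d_X` is unchanged when the
common monomial factor is removed. -/
theorem tt_dX_invariant_of_monomial_factor {G : Type*} [AddCommGroup G]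
    [Fintype G] [DecidableEq G] (a a' b c : G → ZMod 2) (g₀ : G)
    (h : a = conv (delta g₀) a') :
    {w : ℕ | ∃ v : Fin 3 × G → ZMod 2,
        ((TT_HZ a b c).mulVec v = 0 ∧ v ∉ rowSpace (TT_HX a b c)) ∧
          hammingNorm v = w} =
      {w : ℕ | ∃ v : Fin 3 × G → ZMod 2,
        ((TT_HZ a' b c).mulVec v = 0 ∧ v ∉ rowSpace (TT_HX a' b c)) ∧
          hammingNorm v = w} ∧
    sInf {w : ℕ | ∃ v : Fin 3 × G → ZMod 2,
        ((TT_HZ a b c).mulVec v = 0 ∧ v ∉ rowSpace (TT_HX a b c)) ∧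
          hammingNorm v = w} =
      sInf {w : ℕ | ∃ v : Fin 3 × G → ZMod 2,
        ((TT_HZ a' b c).mulVec v = 0 ∧ v ∉ rowSpace (TT_HX a' b c)) ∧
          hammingNorm v = w} := by
  have hweights : logicalWeights (TT_HX a b c) (TT_HZ a b c) =
      logicalWeights (TT_HX a' b c) (TT_HZ a' b c) := by
    rw [← TT_HX_submatrix_blockShift a' b c g₀, ← TT_HZ_submatrix_blockShift a' b c g₀,
      logicalWeights_submatrix, h, delta_conv]
  exact ⟨hweights, congrArg sInf hweights⟩
end
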